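/- Let A be a cone in a real vector space X and f : A → Y a map into a set Y. Define the kernel N(f) as the set of x̃ ∈ X such that for every x ∈ A, both x + x̃ and x − x̃ lie in A and f(x + x̃) = f(x) = f(x − x̃). If f is homogeneous of degree zero (f(a•x) = f(x) for a > 0, x ∈ A with a•x ∈ A automatic since A is a cone), then N(f) is a linear subspace of X: it contains 0, is closed under addition, and is closed under multiplication by any real scalar. -/
import Mathlib


/-- The kernel of a homogeneous-of-degree-zero map on a cone is a linear subspace:
it contains 0, is closed under addition, and closed under arbitrary real scaling. -/
theorem stmt2 {X Y : Type*} [AddCommGroup X] [Module ℝ X]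
    (A : Set X) (hA : ∀ x ∈ A, ∀ a : ℝ, 0 < a → a • x ∈ A)
    (f : X → Y)
    (hhom : ∀ x ∈ A, ∀ a : ℝ, 0 < a → f (a • x) = f x)
    (N : Set X)
    (hN : N = {xt : X | ∀ x ∈ A, (x + xt ∈ A ∧ x - xt ∈ A) ∧
      f (x + xt) = f x ∧ f (x - xt) = f x}) :
    (0 : X) ∈ N ∧ (∀ a ∈ N, ∀ b ∈ N, a + b ∈ N) ∧
      (∀ c : ℝ, ∀ a ∈ N, c • a ∈ N) := by
  subst hN
  have h0 : (0 : X) ∈ {xt : X | ∀ x ∈ A, (x + xt ∈ A ∧ x - xt ∈ A) ∧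
      f (x + xt) = f x ∧ f (x - xt) = f x} := by
    intro x hx; simp [hx]
  have hpos : ∀ c : ℝ, 0 < c → ∀ a ∈ {xt : X | ∀ x ∈ A, (x + xt ∈ A ∧ x - xt ∈ A) ∧
      f (x + xt) = f x ∧ f (x - xt) = f x}, c • a ∈ {xt : X | ∀ x ∈ A, (x + xt ∈ A ∧ x - xt ∈ A) ∧
      f (x + xt) = f x ∧ f (x - xt) = f x} := by
    intro c hc a ha x hx
    have hxc := hA x hx (1/c) (by positivity)
    obtain ⟨⟨h1, h2⟩, h3, h4⟩ := ha _ hxc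
    have hcn : c * (1/c) = 1 := by field_simp
    have e1 : x + c • a = c • ((1/c) • x + a) := by
      rw [smul_add, smul_smul, hcn, one_smul]
    have e2 : x - c • a = c • ((1/c) • x - a) := by
      rw [smul_sub, smul_smul, hcn, one_smul]
    have hfx : f ((1/c) • x) = f x := hhom x hx (1/c) (by positivity)
    refine ⟨⟨?_, ?_⟩, ?_, ?_⟩
    · rw [e1]; exact hA _ h1 c hc
    · rw [e2]; exact hA _ h2 c hc
    · rw [e1, hhom _ h1 c hc, h3, hfx]
    · rw [e2, hhom _ h2 c hc, h4, hfx]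
  have hneg : ∀ a ∈ {xt : X | ∀ x ∈ A, (x + xt ∈ A ∧ x - xt ∈ A) ∧
      f (x + xt) = f x ∧ f (x - xt) = f x}, -a ∈ {xt : X | ∀ x ∈ A, (x + xt ∈ A ∧ x - xt ∈ A) ∧
      f (x + xt) = f x ∧ f (x - xt) = f x} := by
    intro a ha x hx
    obtain ⟨⟨h1, h2⟩, h3, h4⟩ := ha x hx
    rw [sub_neg_eq_add, ← sub_eq_add_neg]
    exact ⟨⟨h2, h1⟩, h4, h3⟩
  refine ⟨h0, ?_, ?_⟩
  · intro a ha b hb x hx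
    obtain ⟨⟨hxa, hxa'⟩, hfa, hfa'⟩ := ha x hx
    obtain ⟨⟨h1, _⟩, h3, _⟩ := hb (x + a) hxa
    obtain ⟨⟨_, h6⟩, _, h8⟩ := hb (x - a) hxa'
    have e1 : x + (a + b) = (x + a) + b := by abel
    have e2 : x - (a + b) = (x - a) - b := by abel
    refine ⟨⟨?_, ?_⟩, ?_, ?_⟩
    · rw [e1]; exact h1
    · rw [e2]; exact h6
    · rw [e1, h3, hfa]
    · rw [e2, h8, hfa']
  · intro c a ha
    rcases lt_trichotomy c 0 with hc | hc | hc
    · have : c • a = (-c) • (-a) := by simp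
      rw [this]
      exact hpos (-c) (by linarith) (-a) (hneg a ha)
    · rw [hc, zero_smul]; exact h0
    · exact hpos c hc a ha
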